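/- arXiv:2411.06367 — 2 statements merged into one kernel-verified Lean document; each statement's English description precedes it below -/
import Mathlib

section
/- Let a > 0 and, for integers j ≥ 1, set q_j = Φ(a√j). Define P(k, τ) = Σ_{j=1}^{k} q_j C(k, j) (1−τ)^j τ^{k−j} and ΔP(k, τ) = P(k, τ) − q₁(1−τ). Then for every integer k ≥ 3 and every τ ∈ [0, 1/2], ΔP(k, τ) > 0. -/
open MeasureTheory Real

/-- The standard normal cumulative distribution function
`Φ(x) = (1/√(2π)) ∫_{-∞}^{x} e^{-t²/2} dt`. -/
noncomputable def stdGaussianCDF (x : ℝ) : ℝ :=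
  (Real.sqrt (2 * Real.pi))⁻¹ * ∫ t in Set.Iic x, Real.exp (-t ^ 2 / 2)

/-- `P(k, τ) = Σ_{j=1}^{k} Φ(a√j) C(k, j) (1−τ)^j τ^{k−j}`. -/
noncomputable def accP (a : ℝ) (k : ℕ) (τ : ℝ) : ℝ :=
  ∑ j ∈ Finset.Icc 1 k,
    stdGaussianCDF (a * Real.sqrt j) * (k.choose j) * (1 - τ) ^ j * τ ^ (k - j)

/-- `ΔP(k, τ) = P(k, τ) − q₁ (1−τ)` where `q₁ = Φ(a)`. -/
noncomputable def deltaP (a : ℝ) (k : ℕ) (τ : ℝ) : ℝ :=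
  accP a k τ - stdGaussianCDF a * (1 - τ)

lemma gauss_integrable : Integrable (fun t : ℝ => Real.exp (-t ^ 2 / 2)) := by
  have h := integrable_exp_neg_mul_sq (by norm_num : (0:ℝ) < 1/2)
  convert h using 2 with t
  ring_nf

lemma stdGaussianCDF_lt {x y : ℝ} (h : x < y) : stdGaussianCDF x < stdGaussianCDF y := by
  unfold stdGaussianCDF
  have hc : 0 < (Real.sqrt (2 * Real.pi))⁻¹ := by
    have := Real.pi_pos; positivity
  apply mul_lt_mul_of_pos_left _ hc
  have hUnion : Set.Iic x ∪ Set.Ioc x y = Set.Iic y := Set.Iic_union_Ioc_eq_Iic h.le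
  have hdisj : Disjoint (Set.Iic x) (Set.Ioc x y) := by
    apply Set.disjoint_left.2
    rintro t ht ⟨h1, h2⟩
    exact absurd ht (not_le.2 h1)
  have hsplit : (∫ t in Set.Iic y, Real.exp (-t ^ 2 / 2))
      = (∫ t in Set.Iic x, Real.exp (-t ^ 2 / 2))
        + ∫ t in Set.Ioc x y, Real.exp (-t ^ 2 / 2) := by
    rw [← hUnion]
    exact MeasureTheory.setIntegral_union hdisj measurableSet_Ioc
      gauss_integrable.integrableOn gauss_integrable.integrableOn
  rw [hsplit]
  have hpos : 0 < ∫ t in Set.Ioc x y, Real.exp (-t ^ 2 / 2) := by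
    rw [MeasureTheory.setIntegral_pos_iff_support_of_nonneg_ae
      (Filter.Eventually.of_forall fun t => (Real.exp_pos _).le)
      gauss_integrable.integrableOn]
    have hsupp : Function.support (fun t : ℝ => Real.exp (-t ^ 2 / 2)) = Set.univ := by
      ext t; simp [Function.mem_support, (Real.exp_pos _).ne']
    rw [hsupp, Set.univ_inter, Real.volume_Ioc]
    exact ENNReal.ofReal_pos.2 (by linarith)
  linarith

lemma stdGaussianCDF_nonneg (x : ℝ) : 0 ≤ stdGaussianCDF x := by
  unfold stdGaussianCDF
  have hc : 0 ≤ (Real.sqrt (2 * Real.pi))⁻¹ := by positivity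
  refine mul_nonneg hc ?_
  exact MeasureTheory.setIntegral_nonneg measurableSet_Iic fun t _ => (Real.exp_pos _).le

lemma stdGaussianCDF_mono : Monotone stdGaussianCDF := by
  intro x y h
  rcases eq_or_lt_of_le h with rfl | h
  · exact le_rfl
  · exact (stdGaussianCDF_lt h).le

theorem stmt2 (a : ℝ) (ha : 0 < a) (k : ℕ) (hk : 3 ≤ k)
    (τ : ℝ) (hτ : τ ∈ Set.Icc (0 : ℝ) (1 / 2)) :
    0 < deltaP a k τ := by
  obtain ⟨hτ0, hτh⟩ := hτ
  have hτ1 : τ < 1 := lt_of_le_of_lt hτh (by norm_num)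
  obtain ⟨m, rfl⟩ : ∃ m, k = m + 1 := ⟨k - 1, by omega⟩
  set k := m + 1 with hkdef
  -- notation
  set q : ℕ → ℝ := fun j => stdGaussianCDF (a * Real.sqrt j) with hq
  set b : ℕ → ℝ := fun j => (k.choose j : ℝ) * (1 - τ) ^ j * τ ^ (k - j) with hb
  have hbnonneg : ∀ j, 0 ≤ b j := by
    intro j
    have h1 : (0:ℝ) ≤ 1 - τ := by linarith
    positivity
  -- q j ≥ Φ(a) for j ≥ 1
  have hqge : ∀ j ∈ Finset.Icc 1 k, stdGaussianCDF a ≤ q j := by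
    intro j hj
    have hj1 : 1 ≤ j := (Finset.mem_Icc.1 hj).1
    have hsq : (1:ℝ) ≤ Real.sqrt j := by
      rw [show (1:ℝ) = Real.sqrt 1 by simp]
      exact Real.sqrt_le_sqrt (by exact_mod_cast hj1)
    have : a ≤ a * Real.sqrt j := le_mul_of_one_le_right ha.le hsq
    exact stdGaussianCDF_mono this
  -- Φ(a) < q k
  have hqk : stdGaussianCDF a < q k := by
    apply stdGaussianCDF_lt
    have h1 : (1:ℝ) < Real.sqrt k := by
      rw [show (1:ℝ) = Real.sqrt 1 by simp]
      apply Real.sqrt_lt_sqrt (by norm_num)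
      exact_mod_cast (by omega : 1 < k)
    calc a = a * 1 := (mul_one a).symm
    _ < a * Real.sqrt k := by exact mul_lt_mul_of_pos_left h1 ha
  -- binomial sum
  have hbinsum : ∑ j ∈ Finset.Icc 1 k, b j = 1 - τ ^ k := by
    have h1 : ((1 - τ) + τ) ^ k
        = ∑ j ∈ Finset.range (k + 1), (1 - τ) ^ j * τ ^ (k - j) * (k.choose j : ℝ) :=
      add_pow _ _ _
    have h2 : Finset.range (k + 1) = insert 0 (Finset.Icc 1 k) := by
      ext j; simp [Finset.mem_range, Finset.mem_Icc]; omega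
    rw [h2, Finset.sum_insert (by simp)] at h1
    simp only [pow_zero, one_mul, Nat.choose_zero_right, Nat.cast_one, mul_one,
      Nat.sub_zero] at h1
    have h3 : ((1 - τ) + τ) ^ k = 1 := by norm_num
    have h4 : ∑ j ∈ Finset.Icc 1 k, (1 - τ) ^ j * τ ^ (k - j) * (k.choose j : ℝ)
        = ∑ j ∈ Finset.Icc 1 k, b j := by
      apply Finset.sum_congr rfl; intro j _; simp [hb]; ring
    rw [h3, h4] at h1
    linarith
  -- accP as sum of q j * b j
  have haccP : accP a k τ = ∑ j ∈ Finset.Icc 1 k, q j * b j := by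
    unfold accP
    apply Finset.sum_congr rfl
    intro j _; simp [hq, hb]; ring
  -- split off top term
  have hsplit : ∑ j ∈ Finset.Icc 1 k, q j * b j
      = (∑ j ∈ Finset.Icc 1 m, q j * b j) + q k * b k :=
    Finset.sum_Icc_succ_top (by omega) _
  have hsplit' : ∑ j ∈ Finset.Icc 1 k, b j
      = (∑ j ∈ Finset.Icc 1 m, b j) + b k :=
    Finset.sum_Icc_succ_top (by omega) _
  -- lower part
  have hlow : ∑ j ∈ Finset.Icc 1 m, stdGaussianCDF a * b j ≤ ∑ j ∈ Finset.Icc 1 m, q j * b j := by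
    apply Finset.sum_le_sum
    intro j hj
    have hj' : j ∈ Finset.Icc 1 k := by
      rw [Finset.mem_Icc] at hj ⊢; omega
    exact mul_le_mul_of_nonneg_right (hqge j hj') (hbnonneg j)
  -- top term strict
  have hbk : 0 < b k := by
    have : b k = (1 - τ) ^ k := by simp [hb]
    rw [this]
    have : (0:ℝ) < 1 - τ := by linarith
    positivity
  have htop : stdGaussianCDF a * b k < q k * b k :=
    mul_lt_mul_of_pos_right hqk hbk
  have hsum_lt : stdGaussianCDF a * ∑ j ∈ Finset.Icc 1 k, b j
      < ∑ j ∈ Finset.Icc 1 k, q j * b j := by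
    rw [hsplit, hsplit', mul_add, Finset.mul_sum]
    exact add_lt_add_of_le_of_lt hlow htop
  -- τ^k ≤ τ
  have hτk : τ ^ k ≤ τ := pow_le_of_le_one hτ0 hτ1.le (by omega)
  have hfinal : stdGaussianCDF a * (1 - τ) ≤ stdGaussianCDF a * (1 - τ ^ k) := by
    apply mul_le_mul_of_nonneg_left (by linarith) (stdGaussianCDF_nonneg a)
  unfold deltaP
  rw [haccP]
  rw [hbinsum] at hsum_lt
  linarith
end

section
/- For every real a ≥ 0 and every integer j ≥ 1, Φ(a√(j+1)) − Φ(a√j) ≤ (1/√(2π)) ∫ from √(j·ln((j+1)/j)) to √((j+1)·ln((j+1)/j)) of e^{−t²/2} dt. Moreover, the bound is attained at a = √(ln((j+1)/j)). -/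
open MeasureTheory ProbabilityTheory Real

/-!
Put `φ(x) = ∫_{xb}^{xc} e^{-t²/2} dt` with `b = √j`, `c = √(j+1)`, so that the left-hand side
is `φ(a)/√(2π)`. Then `φ'(x) = e^{-x²b²/2} (c e^{-x²(c²-b²)/2} - b)`, whose second factor is
decreasing in `x²`. Hence on `[0, ∞)` the function `φ` increases up to the zero `x₀` of `φ'` and
decreases afterwards. Since `c² - b² = 1`, that zero is `x₀ = √(log (c²/b²)) = √(log ((j+1)/j))`,
and `φ(x₀)` is the right-hand side.
-/

lemma integrable_exp_neg_sq_div_two : Integrable (fun t : ℝ => exp (-t ^ 2 / 2)) := by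
  convert integrable_exp_neg_mul_sq (b := 2⁻¹) (by norm_num) using 3
  ring

lemma stdGaussianCDF_sub (x y : ℝ) :
    stdGaussianCDF y - stdGaussianCDF x = (√(2 * π))⁻¹ * ∫ t in x..y, exp (-t ^ 2 / 2) := by
  rw [stdGaussianCDF, stdGaussianCDF, ← mul_sub, intervalIntegral.integral_Iic_sub_Iic
    integrable_exp_neg_sq_div_two.integrableOn integrable_exp_neg_sq_div_two.integrableOn]

lemma Continuous.hasDerivAt_integral_mul_mul {f : ℝ → ℝ} (hf : Continuous f) (b c x : ℝ) :
    HasDerivAt (fun x => ∫ t in x * b..x * c, f t) (c * f (x * c) - b * f (x * b)) x := by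
  have hupper (d : ℝ) : HasDerivAt (fun x => ∫ t in 0..x * d, f t) (d * f (x * d)) x := by
    have := (intervalIntegral.integral_hasDerivAt_right (hf.intervalIntegrable 0 (x * d))
      (hf.stronglyMeasurableAtFilter _ _) hf.continuousAt).comp x (hasDerivAt_mul_const d)
    rwa [mul_comm] at this
  have hsplit : (fun x => ∫ t in x * b..x * c, f t)
      = fun x => (∫ t in 0..x * c, f t) - ∫ t in 0..x * b, f t := by
    funext x
    exact (intervalIntegral.integral_interval_sub_left (hf.intervalIntegrable _ _)
      (hf.intervalIntegrable _ _)).symm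
  rw [hsplit]
  exact (hupper c).sub (hupper b)

lemma le_of_hasDerivAt_nonneg_of_nonpos {φ φ' : ℝ → ℝ} {lo x₀ a : ℝ}
    (hφ : ∀ x, HasDerivAt φ (φ' x) x) (hleft : ∀ x ∈ Set.Ioo lo x₀, 0 ≤ φ' x)
    (hright : ∀ x, x₀ < x → φ' x ≤ 0) (ha : lo ≤ a) : φ a ≤ φ x₀ := by
  have hcont : Continuous φ := continuous_iff_continuousAt.2 fun x => (hφ x).continuousAt
  rcases le_total a x₀ with hax | hxa
  · refine monotoneOn_of_hasDerivWithinAt_nonneg (convex_Icc a x₀) hcont.continuousOn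
      (fun x _ => (hφ x).hasDerivWithinAt) (fun x hx => hleft x ?_)
      ⟨le_rfl, hax⟩ ⟨hax, le_rfl⟩ hax
    rw [interior_Icc] at hx
    exact ⟨ha.trans_lt hx.1, hx.2⟩
  · refine antitoneOn_of_hasDerivWithinAt_nonpos (convex_Icc x₀ a) hcont.continuousOn
      (fun x _ => (hφ x).hasDerivWithinAt) (fun x hx => hright x ?_)
      ⟨le_rfl, hxa⟩ ⟨hxa, le_rfl⟩ hxa
    rw [interior_Icc] at hx
    exact hx.1

lemma mul_exp_neg_mul_sq_sub (b c x : ℝ) :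
    c * exp (-(x * c) ^ 2 / 2) - b * exp (-(x * b) ^ 2 / 2)
      = exp (-(x * b) ^ 2 / 2) * (c * exp (-x ^ 2 * (c ^ 2 - b ^ 2) / 2) - b) := by
  rw [show -(x * c) ^ 2 / 2 = -(x * b) ^ 2 / 2 + -x ^ 2 * (c ^ 2 - b ^ 2) / 2 by ring, exp_add]
  ring

/-- `hcrit` says that `x₀` is the critical point `√(2 log (c/b) / (c² - b²))` of
`x ↦ ∫_{xb}^{xc} e^{-t²/2} dt`. -/
theorem integral_exp_neg_sq_div_two_mul_le {b c x₀ a : ℝ} (hb : 0 ≤ b) (hbc : b ≤ c)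
    (hx₀ : 0 ≤ x₀) (hcrit : c * exp (-x₀ ^ 2 * (c ^ 2 - b ^ 2) / 2) = b) (ha : 0 ≤ a) :
    ∫ t in a * b..a * c, exp (-t ^ 2 / 2) ≤ ∫ t in x₀ * b..x₀ * c, exp (-t ^ 2 / 2) := by
  have hd : 0 ≤ c ^ 2 - b ^ 2 := by nlinarith
  have hanti {x y : ℝ} (hxy : x ^ 2 ≤ y ^ 2) :
      c * exp (-y ^ 2 * (c ^ 2 - b ^ 2) / 2) ≤ c * exp (-x ^ 2 * (c ^ 2 - b ^ 2) / 2) :=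
    mul_le_mul_of_nonneg_left (exp_le_exp.2 (by nlinarith [mul_le_mul_of_nonneg_right hxy hd]))
      (hb.trans hbc)
  refine le_of_hasDerivAt_nonneg_of_nonpos
    (fun x => (continuous_exp.comp (by fun_prop)).hasDerivAt_integral_mul_mul b c x)
    (fun x hx => ?_) (fun x hx => ?_) ha
  · rw [Function.comp_apply, Function.comp_apply, mul_exp_neg_mul_sq_sub]
    refine mul_nonneg (exp_pos _).le (sub_nonneg.2 ?_)
    exact hcrit.symm.le.trans (hanti (by nlinarith [hx.1, hx.2]))
  · rw [Function.comp_apply, Function.comp_apply, mul_exp_neg_mul_sq_sub]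
    refine mul_nonpos_of_nonneg_of_nonpos (exp_pos _).le (sub_nonpos.2 ?_)
    exact (hanti (by nlinarith)).trans hcrit.le

lemma sqrt_add_one_mul_exp_neg_log_div {j : ℝ} (hj : 0 < j) :
    √(j + 1) * exp (-√(log ((j + 1) / j)) ^ 2 * (√(j + 1) ^ 2 - √j ^ 2) / 2) = √j := by
  have hlog : 0 ≤ log ((j + 1) / j) := log_nonneg (by rw [le_div_iff₀ hj]; linarith)
  rw [sq_sqrt hlog, sq_sqrt (by linarith), sq_sqrt hj.le, add_sub_cancel_left, mul_one,
    neg_div, exp_neg, exp_half, exp_log (by positivity), ← sqrt_inv, inv_div,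
    ← sqrt_mul (by linarith), mul_div_cancel₀ _ (by positivity)]

theorem stmt5 (a : ℝ) (ha : 0 ≤ a) (j : ℕ) (hj : 1 ≤ j) :
    stdGaussianCDF (a * Real.sqrt ((j : ℝ) + 1)) - stdGaussianCDF (a * Real.sqrt j)
      ≤ (Real.sqrt (2 * Real.pi))⁻¹
        * ∫ t in Real.sqrt ((j : ℝ) * Real.log (((j : ℝ) + 1) / j))..
            Real.sqrt (((j : ℝ) + 1) * Real.log (((j : ℝ) + 1) / j)),
            Real.exp (-t ^ 2 / 2)
      ∧ (let a₀ := Real.sqrt (Real.log (((j : ℝ) + 1) / j));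
          stdGaussianCDF (a₀ * Real.sqrt ((j : ℝ) + 1)) - stdGaussianCDF (a₀ * Real.sqrt j)
            = (Real.sqrt (2 * Real.pi))⁻¹
              * ∫ t in Real.sqrt ((j : ℝ) * Real.log (((j : ℝ) + 1) / j))..
                  Real.sqrt (((j : ℝ) + 1) * Real.log (((j : ℝ) + 1) / j)),
                  Real.exp (-t ^ 2 / 2)) := by
  have hj₀ : (0 : ℝ) < j := by exact_mod_cast hj
  have hendpoint (k : ℝ) (hk : 0 ≤ k) :
      √(log ((j + 1) / j)) * √k = √(k * log ((j + 1) / j)) := by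
    rw [sqrt_mul hk, mul_comm]
  simp only [stdGaussianCDF_sub, ← hendpoint j hj₀.le, ← hendpoint (j + 1) (by positivity),
    and_true]
  exact mul_le_mul_of_nonneg_left (integral_exp_neg_sq_div_two_mul_le (sqrt_nonneg _)
    (sqrt_le_sqrt (by linarith)) (sqrt_nonneg _) (sqrt_add_one_mul_exp_neg_log_div hj₀) ha)
    (by positivity)
end
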